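/- Let L = L₀ ⊕ L₁ be a complex Leibniz superalgebra with dim L₀ = n, dim L₁ = m, and nilindex equal to n + m + 1. Then either (i) m = 0 and L₀ has a basis e₁, …, e_n with [e_i, e₁] = e_{i+1} for 1 ≤ i ≤ n−1 and all other products of basis elements equal to zero; or (ii) m ≠ 0 and L has a basis e₁, …, e_{n+m} with e_i ∈ L₁ for i odd and e_i ∈ L₀ for i even, such that [e_i, e₁] = e_{i+1} for 1 ≤ i ≤ n+m−1, [e_i, e₂] = 2e_{i+2} for 1 ≤ i ≤ n+m−2, and all other products of basis elements are equal to zero. -/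

import Mathlib

/-- A complex Leibniz superalgebra: a complex vector space `V` with an internal
direct-sum decomposition `V = L0 ⊕ L1`, a bilinear bracket respecting the
`ℤ/2`-grading and satisfying the Leibniz superidentity (for homogeneous
second and third arguments). -/
structure LeibnizSuper (V : Type) [AddCommGroup V] [Module ℂ V] where
  bracket : V →ₗ[ℂ] V →ₗ[ℂ] V
  L0 : Submodule ℂ V
  L1 : Submodule ℂ V
  compl : IsCompl L0 L1
  g00 : ∀ a ∈ L0, ∀ b ∈ L0, bracket a b ∈ L0
  g01 : ∀ a ∈ L0, ∀ b ∈ L1, bracket a b ∈ L1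
  g10 : ∀ a ∈ L1, ∀ b ∈ L0, bracket a b ∈ L1
  g11 : ∀ a ∈ L1, ∀ b ∈ L1, bracket a b ∈ L0
  super_jacobi : ∀ (x : V) (α β : Bool) (y z : V),
    y ∈ (if α then L1 else L0) → z ∈ (if β then L1 else L0) →
    bracket x (bracket y z) =
      bracket (bracket x y) z - (if α && β then (-1 : ℂ) else 1) • bracket (bracket x z) y

variable {V : Type} [AddCommGroup V] [Module ℂ V]

/-- Descending central series of a Leibniz superalgebra:
`dcs S k` is `L^{k+1}`, i.e. `dcs S 0 = L¹ = L`. -/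
def LeibnizSuper.dcs (S : LeibnizSuper V) : ℕ → Submodule ℂ V
  | 0 => ⊤
  | k + 1 => Submodule.span ℂ {v | ∃ a ∈ S.dcs k, ∃ b : V, v = S.bracket a b}

/-- Descending central series of the even part `L₀` (a Leibniz algebra):
`dcs0 S k` is `L₀^{k+1}`, i.e. `dcs0 S 0 = L₀`. -/
def LeibnizSuper.dcs0 (S : LeibnizSuper V) : ℕ → Submodule ℂ V
  | 0 => S.L0
  | k + 1 => Submodule.span ℂ {v | ∃ a ∈ S.dcs0 k, ∃ b ∈ S.L0, v = S.bracket a b}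

/-- `G` generates the superalgebra: the smallest linear subspace containing `G`
and closed under the bracket is all of `V`. -/
def LeibnizSuper.generates (S : LeibnizSuper V) (G : Set V) : Prop :=
  ∀ p : Submodule ℂ V, G ⊆ p → (∀ a ∈ p, ∀ b ∈ p, S.bracket a b ∈ p) → p = ⊤

/-- The nilindex: the minimal `s ≥ 1` with `L^s = 0`. -/
noncomputable def LeibnizSuper.nilindex (S : LeibnizSuper V) : ℕ :=
  sInf {s | 1 ≤ s ∧ S.dcs (s - 1) = ⊥}

/-- The characteristic-sequence condition `n₁ ≤ n - 2`, `m₁ ≤ m - 1`: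
for every `x ∈ L₀ \ L₀²` the right multiplication operator `R_x`
satisfies `R_x^{n-2} = 0` on `L₀` and `R_x^{m-1} = 0` on `L₁`. -/
def LeibnizSuper.charSeqLE (S : LeibnizSuper V) (n m : ℕ) : Prop :=
  ∀ x ∈ S.L0, x ∉ S.dcs0 1 →
    (∀ v ∈ S.L0, ((S.bracket.flip x : Module.End ℂ V) ^ (n - 2)) v = 0) ∧
    (∀ v ∈ S.L1, ((S.bracket.flip x : Module.End ℂ V) ^ (m - 1)) v = 0)

/-!
Choose a homogeneous `x` outside `L²`. Maximal nilindex forces every quotient `L^k / L^{k+1}` to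
be one-dimensional, so `L²` has codimension one and, since `[L^k, L²] ⊆ L^{k+2}` by the Leibniz
identity, `L^k` is spanned modulo `L^{k+1}` by `R_x^k x`. Hence `x, R_x x, …, R_x^{n+m-1} x` is a
basis. If `x` is even it lies in `L₀` with all its right powers, forcing `m = 0`; otherwise `x` is
odd, `[y, [x, x]] = 2 [[y, x], x]`, and every longer right power of `x` right-annihilates `L`.
-/

namespace LeibnizSuper

open Module Submodule

variable (S : LeibnizSuper V)

def IsHomogeneous (x : V) : Prop := x ∈ S.L0 ∨ x ∈ S.L1

lemma mem_of_forall_isHomogeneous_mem (p : Submodule ℂ V) (h : ∀ x, S.IsHomogeneous x → x ∈ p)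
    (v : V) : v ∈ p := by
  have hle : S.L0 ⊔ S.L1 ≤ p :=
    sup_le (fun x hx => h x (Or.inl hx)) (fun x hx => h x (Or.inr hx))
  exact hle (codisjoint_iff.mp S.compl.codisjoint ▸ mem_top)

lemma exists_super_jacobi_of_isHomogeneous {y z : V} (hy : S.IsHomogeneous y)
    (hz : S.IsHomogeneous z) : ∃ s : ℂ, ∀ w,
      S.bracket w (S.bracket y z) = S.bracket (S.bracket w y) z - s • S.bracket (S.bracket w z) y := by
  obtain ⟨α, hα⟩ : ∃ α : Bool, y ∈ if α then S.L1 else S.L0 := by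
    rcases hy with hy | hy
    exacts [⟨false, hy⟩, ⟨true, hy⟩]
  obtain ⟨β, hβ⟩ : ∃ β : Bool, z ∈ if β then S.L1 else S.L0 := by
    rcases hz with hz | hz
    exacts [⟨false, hz⟩, ⟨true, hz⟩]
  exact ⟨_, fun w => S.super_jacobi w α β y z hα hβ⟩

lemma bracket_bracket_eq_zero {y z : V} (hy : S.IsHomogeneous y) (hz : S.IsHomogeneous z)
    (hy0 : ∀ w, S.bracket w y = 0) (w : V) : S.bracket w (S.bracket y z) = 0 := by
  obtain ⟨s, hs⟩ := S.exists_super_jacobi_of_isHomogeneous hy hz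
  simp [hs, hy0]

section DescendingCentralSeries

lemma bracket_mem_dcs_succ {a : V} {k : ℕ} (ha : a ∈ S.dcs k) (b : V) :
    S.bracket a b ∈ S.dcs (k + 1) :=
  subset_span ⟨a, ha, b, rfl⟩

lemma dcs_succ_le : ∀ k, S.dcs (k + 1) ≤ S.dcs k
  | 0 => le_top
  | k + 1 => span_mono fun _ ⟨a, ha, b, hv⟩ => ⟨a, dcs_succ_le k ha, b, hv⟩

lemma dcs_antitone : Antitone S.dcs :=
  antitone_nat_of_succ_le S.dcs_succ_le

lemma dcs_add_eq_of_succ_eq {k : ℕ} (h : S.dcs (k + 1) = S.dcs k) :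
    ∀ j, S.dcs (k + j) = S.dcs k
  | 0 => rfl
  | j + 1 => by
    show span ℂ {v | ∃ a ∈ S.dcs (k + j), ∃ b, v = S.bracket a b} = _
    rw [dcs_add_eq_of_succ_eq h j]
    exact h

lemma bracket_mem_dcs_add_two {a w : V} {k : ℕ} (ha : a ∈ S.dcs k) (hw : w ∈ S.dcs 1) :
    S.bracket a w ∈ S.dcs (k + 2) := by
  have hhom : ∀ y z, S.IsHomogeneous y → S.IsHomogeneous z →
      S.bracket a (S.bracket y z) ∈ S.dcs (k + 2) := by
    intro y z hy hz
    obtain ⟨s, hs⟩ := S.exists_super_jacobi_of_isHomogeneous hy hz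
    rw [hs]
    exact sub_mem (S.bracket_mem_dcs_succ (S.bracket_mem_dcs_succ ha y) z)
      (smul_mem _ _ (S.bracket_mem_dcs_succ (S.bracket_mem_dcs_succ ha z) y))
  -- `[a, [y, z]]` is linear in `y` and in `z`, so homogeneous `y` and `z` suffice.
  have hall : ∀ y z, S.bracket a (S.bracket y z) ∈ S.dcs (k + 2) := fun y z =>
    S.mem_of_forall_isHomogeneous_mem ((S.dcs (k + 2)).comap ((S.bracket a).comp (S.bracket.flip z)))
      (fun y hy => S.mem_of_forall_isHomogeneous_mem
        ((S.dcs (k + 2)).comap ((S.bracket a).comp (S.bracket y))) (hhom y · hy) z) y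
  have hle : S.dcs 1 ≤ (S.dcs (k + 2)).comap (S.bracket a) :=
    span_le.mpr fun _ ⟨y, _, z, hv⟩ => hv ▸ hall y z
  exact hle hw

end DescendingCentralSeries

section MaximalNilindex

variable {S} {N : ℕ}

lemma dcs_eq_bot_iff_of_nilindex_eq (h : S.nilindex = N + 1) {k : ℕ} :
    S.dcs k = ⊥ ↔ N ≤ k := by
  rw [nilindex] at h
  constructor
  · intro hk
    have := Nat.sInf_le (show k + 1 ∈ {s | 1 ≤ s ∧ S.dcs (s - 1) = ⊥} from ⟨by omega, hk⟩)
    omega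
  · intro hk
    have hN : S.dcs N = ⊥ := by
      simpa [h] using (Nat.sInf_mem (Nat.nonempty_of_sInf_eq_succ h)).2
    exact eq_bot_iff.mpr (hN ▸ S.dcs_antitone hk)

lemma dcs_succ_lt_of_nilindex_eq (h : S.nilindex = N + 1) {k : ℕ} (hk : k < N) :
    S.dcs (k + 1) < S.dcs k := by
  refine lt_of_le_of_ne (S.dcs_succ_le k) fun heq => ?_
  have hstab := S.dcs_add_eq_of_succ_eq heq (N - k)
  rw [Nat.add_sub_cancel' hk.le, (dcs_eq_bot_iff_of_nilindex_eq h).2 le_rfl] at hstab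
  exact hk.not_ge ((dcs_eq_bot_iff_of_nilindex_eq h).1 hstab.symm)

variable [FiniteDimensional ℂ V]

lemma sub_le_finrank_dcs_of_nilindex_eq (h : S.nilindex = N + 1) (k : ℕ) :
    N - k ≤ finrank ℂ (S.dcs k) := by
  induction hd : N - k generalizing k with
  | zero => exact Nat.zero_le _
  | succ d ih =>
    have := ih (k + 1) (by omega)
    have := finrank_lt_finrank_of_lt (dcs_succ_lt_of_nilindex_eq h (k := k) (by omega))
    omega

lemma span_singleton_sup_dcs_one_eq_top (h : S.nilindex = N + 1) (hdim : finrank ℂ V = N)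
    {u : V} (hu : u ∉ S.dcs 1) : span ℂ {u} ⊔ S.dcs 1 = ⊤ := by
  have hlt : S.dcs 1 < span ℂ {u} ⊔ S.dcs 1 :=
    lt_of_le_of_ne le_sup_right fun heq => hu (heq ▸ mem_sup_left (mem_span_singleton_self u))
  have h1 := sub_le_finrank_dcs_of_nilindex_eq h 1
  have h2 := finrank_lt_finrank_of_lt hlt
  have h3 := finrank_le (span ℂ {u} ⊔ S.dcs 1)
  refine eq_top_of_finrank_eq ?_
  omega

lemma exists_isHomogeneous_span_singleton_sup_dcs_one_eq_top (h : S.nilindex = N + 1)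
    (hdim : finrank ℂ V = N) : ∃ x, S.IsHomogeneous x ∧ span ℂ {x} ⊔ S.dcs 1 = ⊤ := by
  by_contra! hcon
  have hmem : ∀ x, S.IsHomogeneous x → x ∈ S.dcs 1 := fun x hx => by
    by_contra hx1
    exact hcon x hx (span_singleton_sup_dcs_one_eq_top h hdim hx1)
  have htop : S.dcs 1 = ⊤ := eq_top_iff.mpr fun v _ => S.mem_of_forall_isHomogeneous_mem _ hmem v
  exact hcon 0 (Or.inl (zero_mem _)) (by rw [htop, sup_top_eq])

end MaximalNilindex

/-- `S.chain x k` is `R_x^k x`, where `R_x = [·, x]` is right multiplication by `x`. -/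
def chain (x : V) : ℕ → V
  | 0 => x
  | k + 1 => S.bracket (chain x k) x

section Chain

variable {S} {x : V}

lemma chain_mem_dcs (x : V) : ∀ k, S.chain x k ∈ S.dcs k
  | 0 => mem_top
  | k + 1 => S.bracket_mem_dcs_succ (chain_mem_dcs x k) x

lemma chain_eq_zero_of_le {N k : ℕ} (hN : S.dcs N = ⊥) (hk : N ≤ k) : S.chain x k = 0 := by
  simpa [hN] using S.dcs_antitone hk (chain_mem_dcs x k)

lemma dcs_le_span_chain_sup (hx : span ℂ {x} ⊔ S.dcs 1 = ⊤) :
    ∀ k, S.dcs k ≤ span ℂ {S.chain x k} ⊔ S.dcs (k + 1)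
  | 0 => hx.ge
  | k + 1 => by
    refine span_le.mpr ?_
    rintro _ ⟨a, ha, b, rfl⟩
    obtain ⟨_, hy, a', ha', rfl⟩ := mem_sup.mp (dcs_le_span_chain_sup hx k ha)
    obtain ⟨c, rfl⟩ := mem_span_singleton.mp hy
    obtain ⟨_, hu, w, hw, rfl⟩ := mem_sup.mp (hx ▸ mem_top : b ∈ span ℂ {x} ⊔ S.dcs 1)
    obtain ⟨d, rfl⟩ := mem_span_singleton.mp hu
    have hexp : S.bracket (c • S.chain x k + a') (d • x + w)
        = (c * d) • S.chain x (k + 1) + (c • S.bracket (S.chain x k) w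
          + (d • S.bracket a' x + S.bracket a' w)) := by
      simp only [chain, map_add, map_smul, LinearMap.add_apply, LinearMap.smul_apply]
      module
    rw [SetLike.mem_coe, hexp]
    refine add_mem (mem_sup_left (smul_mem _ _ (mem_span_singleton_self _)))
      (mem_sup_right (add_mem (smul_mem _ _ ?_) (add_mem (smul_mem _ _ ?_) ?_)))
    · exact S.bracket_mem_dcs_add_two (chain_mem_dcs x k) hw
    · exact S.bracket_mem_dcs_succ ha' x
    · exact S.dcs_succ_le _ (S.bracket_mem_dcs_add_two ha' hw)

lemma span_chain_eq_top (hx : span ℂ {x} ⊔ S.dcs 1 = ⊤) {N : ℕ} (hN : S.dcs N = ⊥) :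
    span ℂ (Set.range fun i : Fin N => S.chain x i) = ⊤ := by
  set P := span ℂ (Set.range fun i : Fin N => S.chain x i)
  have key : ∀ k ≤ N, P ⊔ S.dcs k = ⊤ := by
    intro k
    induction k with
    | zero => exact fun _ => sup_top_eq P
    | succ k ih =>
      intro hk
      refine eq_top_iff.mpr ((ih (by omega)).ge.trans (sup_le le_sup_left ?_))
      refine (dcs_le_span_chain_sup hx k).trans (sup_le (le_sup_of_le_left ?_) le_sup_right)
      exact span_mono (Set.singleton_subset_iff.mpr ⟨⟨k, by omega⟩, rfl⟩)
  simpa [hN] using key N le_rfl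

lemma exists_basis_chain (hx : span ℂ {x} ⊔ S.dcs 1 = ⊤) {N : ℕ} (hN : S.dcs N = ⊥)
    (hdim : finrank ℂ V = N) : ∃ e : Basis (Fin N) ℂ V, ∀ i, e i = S.chain x i :=
  ⟨basisOfTopLeSpanOfCardEqFinrank _ (span_chain_eq_top hx hN).ge (by simp [hdim]),
    fun i => by simp⟩

lemma chain_mem_L0_of_mem_L0 (hx : x ∈ S.L0) : ∀ k, S.chain x k ∈ S.L0
  | 0 => hx
  | k + 1 => S.g00 _ (chain_mem_L0_of_mem_L0 hx k) _ hx

lemma chain_mem_of_mem_L1 (hx : x ∈ S.L1) :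
    ∀ k, if k % 2 = 0 then S.chain x k ∈ S.L1 else S.chain x k ∈ S.L0
  | 0 => hx
  | k + 1 => by
    have ih := chain_mem_of_mem_L1 hx k
    by_cases hk : k % 2 = 0
    · rw [if_pos hk] at ih
      rw [if_neg (by omega)]
      exact S.g11 _ ih _ hx
    · rw [if_neg hk] at ih
      rw [if_pos (by omega)]
      exact S.g01 _ ih _ hx

lemma isHomogeneous_chain (hx : S.IsHomogeneous x) (k : ℕ) : S.IsHomogeneous (S.chain x k) := by
  rcases hx with hx | hx
  · exact Or.inl (chain_mem_L0_of_mem_L0 hx k)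
  · have h := chain_mem_of_mem_L1 hx k
    split_ifs at h
    exacts [Or.inr h, Or.inl h]

lemma bracket_chain_eq_zero_of_le (hx : S.IsHomogeneous x) {j : ℕ}
    (hj : ∀ w, S.bracket w (S.chain x j) = 0) {k : ℕ} (hk : j ≤ k) (w : V) :
    S.bracket w (S.chain x k) = 0 := by
  induction k, hk using Nat.le_induction generalizing w with
  | base => exact hj w
  | succ k _ ih => exact S.bracket_bracket_eq_zero (isHomogeneous_chain hx k) hx ih w

lemma bracket_chain_succ_of_mem_L0 (hx : x ∈ S.L0) (j : ℕ) (w : V) :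
    S.bracket w (S.chain x (j + 1)) = 0 := by
  refine bracket_chain_eq_zero_of_le (Or.inl hx) (fun w => ?_) (Nat.le_add_left 1 j) w
  simpa [chain] using S.super_jacobi w false false x x hx hx

lemma bracket_chain_one_of_mem_L1 (hx : x ∈ S.L1) (w : V) :
    S.bracket w (S.chain x 1) = (2 : ℂ) • S.bracket (S.bracket w x) x := by
  rw [chain, chain, S.super_jacobi w true true x x hx hx]
  simp [two_smul]

lemma bracket_chain_add_two_of_mem_L1 (hx : x ∈ S.L1) (j : ℕ) (w : V) :
    S.bracket w (S.chain x (j + 2)) = 0 := by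
  refine bracket_chain_eq_zero_of_le (Or.inr hx) (fun w => ?_) (Nat.le_add_left 2 j) w
  have h1 : S.chain x 1 ∈ S.L0 := S.g11 x hx x hx
  rw [chain, S.super_jacobi w false true _ x h1 hx, bracket_chain_one_of_mem_L1 hx,
    bracket_chain_one_of_mem_L1 hx]
  simp

variable {N : ℕ}

lemma exists_basis_chain_of_mem_L0 (hx : x ∈ S.L0) (hgen : span ℂ {x} ⊔ S.dcs 1 = ⊤)
    (hN : S.dcs N = ⊥) (hdim : finrank ℂ V = N) :
    ∃ e : Basis (Fin N) ℂ V, (∀ i, e i ∈ S.L0) ∧ ∀ i j : Fin N, S.bracket (e i) (e j) =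
      if h : (j : ℕ) = 0 ∧ (i : ℕ) + 1 < N then e ⟨(i : ℕ) + 1, h.2⟩ else 0 := by
  obtain ⟨e, he⟩ := exists_basis_chain hgen hN hdim
  refine ⟨e, fun i => he i ▸ chain_mem_L0_of_mem_L0 hx i, fun i j => ?_⟩
  simp only [he]
  split_ifs with h
  · rw [h.1]
    rfl
  · by_cases hj : (j : ℕ) = 0
    · rw [hj]
      exact chain_eq_zero_of_le (k := i + 1) hN (by omega)
    · obtain ⟨j', hj'⟩ := Nat.exists_eq_succ_of_ne_zero hj
      rw [hj']
      exact bracket_chain_succ_of_mem_L0 hx j' _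

lemma exists_basis_chain_of_mem_L1 (hx : x ∈ S.L1) (hgen : span ℂ {x} ⊔ S.dcs 1 = ⊤)
    (hN : S.dcs N = ⊥) (hdim : finrank ℂ V = N) :
    ∃ e : Basis (Fin N) ℂ V,
      (∀ k : Fin N, if (k : ℕ) % 2 = 0 then e k ∈ S.L1 else e k ∈ S.L0) ∧
      ∀ i j : Fin N, S.bracket (e i) (e j) =
        if h : (j : ℕ) = 0 ∧ (i : ℕ) + 1 < N then e ⟨(i : ℕ) + 1, h.2⟩
        else if h' : (j : ℕ) = 1 ∧ (i : ℕ) + 2 < N then (2 : ℂ) • e ⟨(i : ℕ) + 2, h'.2⟩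
        else 0 := by
  obtain ⟨e, he⟩ := exists_basis_chain hgen hN hdim
  refine ⟨e, fun k => he k ▸ chain_mem_of_mem_L1 hx k, fun i j => ?_⟩
  simp only [he]
  split_ifs with h0 h1
  · rw [h0.1]
    rfl
  · rw [h1.1, bracket_chain_one_of_mem_L1 hx]
    rfl
  · by_cases hj0 : (j : ℕ) = 0
    · rw [hj0]
      exact chain_eq_zero_of_le (k := i + 1) hN (by omega)
    by_cases hj1 : (j : ℕ) = 1
    · rw [hj1, bracket_chain_one_of_mem_L1 hx]
      exact smul_eq_zero_of_right _ (chain_eq_zero_of_le (k := i + 2) hN (by omega))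
    obtain ⟨j', hj'⟩ : ∃ j', (j : ℕ) = j' + 2 := ⟨j - 2, by omega⟩
    rw [hj']
    exact bracket_chain_add_two_of_mem_L1 hx j' _

end Chain

end LeibnizSuper

open Module Submodule LeibnizSuper

/-- Theorem 2.1 of the paper: classification of complex Leibniz
superalgebras of maximal nilindex `n + m + 1`.  Either `m = 0` and `L = L₀` has
a basis `e₁, …, e_n` (indexed here by `Fin n`, so `e₁ = e 0`) with
`[e_i, e₁] = e_{i+1}` and all other products zero; or `m ≠ 0` and `L` has a
basis `e₁, …, e_{n+m}` alternating between `L₁` (odd positions) and `L₀` (even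
positions) with `[e_i, e₁] = e_{i+1}`, `[e_i, e₂] = 2 e_{i+2}` and all other
products of basis elements zero. -/
theorem leibnizSuper_maximal_nilindex_classification
    {V : Type} [AddCommGroup V] [Module ℂ V] [FiniteDimensional ℂ V]
    (S : LeibnizSuper V) (n m : ℕ)
    (hdim0 : Module.finrank ℂ S.L0 = n) (hdim1 : Module.finrank ℂ S.L1 = m)
    (hnil : S.nilindex = n + m + 1) :
    (m = 0 ∧ ∃ e : Module.Basis (Fin n) ℂ V, (∀ i : Fin n, e i ∈ S.L0) ∧
      ∀ i j : Fin n, S.bracket (e i) (e j) =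
        if h : (j : ℕ) = 0 ∧ (i : ℕ) + 1 < n then e ⟨(i : ℕ) + 1, h.2⟩ else 0) ∨
    (m ≠ 0 ∧ ∃ e : Module.Basis (Fin (n + m)) ℂ V,
      (∀ k : Fin (n + m), if (k : ℕ) % 2 = 0 then e k ∈ S.L1 else e k ∈ S.L0) ∧
      ∀ i j : Fin (n + m), S.bracket (e i) (e j) =
        if h : (j : ℕ) = 0 ∧ (i : ℕ) + 1 < n + m then e ⟨(i : ℕ) + 1, h.2⟩
        else if h' : (j : ℕ) = 1 ∧ (i : ℕ) + 2 < n + m then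
          (2 : ℂ) • e ⟨(i : ℕ) + 2, h'.2⟩
        else 0) := by
  have hdim : finrank ℂ V = n + m := by
    rw [← finrank_add_eq_of_isCompl S.compl, hdim0, hdim1]
  have hN : S.dcs (n + m) = ⊥ := (dcs_eq_bot_iff_of_nilindex_eq hnil).2 le_rfl
  obtain ⟨x, hx, hgen⟩ := exists_isHomogeneous_span_singleton_sup_dcs_one_eq_top hnil hdim
  by_cases hm : m = 0
  · subst hm
    have hx0 : x ∈ S.L0 := by
      refine hx.elim id fun hx1 => ?_
      rw [finrank_eq_zero.mp hdim1, mem_bot] at hx1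
      exact hx1 ▸ zero_mem _
    exact Or.inl ⟨rfl, exists_basis_chain_of_mem_L0 hx0 hgen hN hdim⟩
  · have hx1 : x ∈ S.L1 := hx.resolve_left fun hx0 => hm <| by
      have hL0 : S.L0 = ⊤ := top_le_iff.mp <| span_chain_eq_top hgen hN ▸
        span_le.mpr (Set.range_subset_iff.mpr fun i => chain_mem_L0_of_mem_L0 hx0 i)
      rw [hL0, finrank_top, hdim] at hdim0
      omega
    exact Or.inr ⟨hm, exists_basis_chain_of_mem_L1 hx1 hgen hN hdim⟩
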